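/- Let d ∈ ℕ, 2 ≤ p < ∞ and 0 < θ ≤ 1. Then the Besov space of dominating mixed smoothness 𝐁^{1/θ−1/2}_{p,θ} embeds into the Wiener space 𝒜_θ with embedding constant 1 (independently of d): for every f ∈ 𝐁^{1/θ−1/2}_{p,θ}(𝕋^d) it holds ‖f‖_{𝒜_θ} = (∑_{k∈ℤ^d} |f̂(k)|^θ)^{1/θ} ≤ ‖f‖_{𝐁^{1/θ−1/2}_{p,θ}}. -/

import Mathlib

open MeasureTheory Real ENNReal

noncomputable section

/-- Normalized Lebesgue measure on the unit cube `[0,1]^d`, modelling the torus `𝕋^d`. -/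
def unitCube (d : ℕ) : Measure (Fin d → ℝ) :=
  volume.restrict (Set.univ.pi fun _ => Set.Icc (0 : ℝ) 1)

/-- The complex exponential `exp(2πi k·x)`. -/
def trigChar {d : ℕ} (k : Fin d → ℤ) (x : Fin d → ℝ) : ℂ :=
  Complex.exp (2 * (Real.pi : ℂ) * Complex.I * ∑ j, (k j : ℂ) * (x j : ℂ))

/-- The `k`-th Fourier coefficient of `f`. -/
def fourierCoef {d : ℕ} (f : (Fin d → ℝ) → ℂ) (k : Fin d → ℤ) : ℂ :=
  ∫ x, f x * Complex.exp (-(2 * (Real.pi : ℂ) * Complex.I) * ∑ j, (k j : ℂ) * (x j : ℂ))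
    ∂(unitCube d)

/-- The Wiener quasi-norm `‖f‖_{𝒜_θ}`, valued in `ℝ≥0∞`. -/
def wienerNorm {d : ℕ} (θ : ℝ) (f : (Fin d → ℝ) → ℂ) : ℝ≥0∞ :=
  (∑' k : Fin d → ℤ, (‖fourierCoef f k‖₊ : ℝ≥0∞) ^ θ) ^ (1 / θ)

/-- Dyadic block `I_0 = {0}`, `I_n = {k : 2^{n-1} ≤ |k| < 2^n}`. -/
def blockZ : ℕ → Finset ℤ
  | 0 => {0}
  | n + 1 => Finset.Icc (-(2 ^ (n + 1) - 1) : ℤ) (2 ^ (n + 1) - 1) \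
      Finset.Icc (-(2 ^ n - 1) : ℤ) (2 ^ n - 1)

/-- Dyadic block `I_l = I_{l_1} × ⋯ × I_{l_d} ⊆ ℤ^d`. -/
def blockD (d : ℕ) (l : Fin d → ℕ) : Finset (Fin d → ℤ) :=
  Fintype.piFinset fun j => blockZ (l j)

/-- The dyadic block projection `∑_{k ∈ I_l} f̂(k) e^{2πi k·x}`. -/
def blockProj {d : ℕ} (f : (Fin d → ℝ) → ℂ) (l : Fin d → ℕ) : (Fin d → ℝ) → ℂ :=
  fun x => ∑ k ∈ blockD d l, fourierCoef f k * trigChar k x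

/-- The quasi-norm of the Besov space `𝐁^r_{p,θ}` of dominating mixed smoothness. -/
def besovNorm (d : ℕ) (p θ r : ℝ) (f : (Fin d → ℝ) → ℂ) : ℝ≥0∞ :=
  (∑' l : Fin d → ℕ, ENNReal.ofReal ((2 : ℝ) ^ ((∑ j, (l j : ℝ)) * r * θ)) *
      eLpNorm (blockProj f l) (ENNReal.ofReal p) (unitCube d) ^ θ) ^ (1 / θ)

/-!
Group the frequencies into the dyadic blocks `I_l`, which partition `ℤ^d` and satisfy
`#I_l ≤ 2^{|l|₁}`. On one block, Hölder's inequality with exponent `2/θ` and Parseval give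
`∑_{k ∈ I_l} |f̂(k)|^θ ≤ #I_l^{1-θ/2} ‖δ_l f‖₂^θ ≤ 2^{|l|₁(1/θ-1/2)θ} ‖δ_l f‖_p^θ`,
where `δ_l f` is the block projection and `‖·‖₂ ≤ ‖·‖_p` because the torus has measure one.
Summing over `l` yields the embedding with constant `1`.
-/

lemma mem_blockZ_succ_iff {k : ℤ} {n : ℕ} :
    k ∈ blockZ (n + 1) ↔ 2 ^ n ≤ k.natAbs ∧ k.natAbs < 2 ^ (n + 1) := by
  simp only [blockZ, Finset.mem_sdiff, Finset.mem_Icc, not_and, not_le]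
  have h2n : ((2 ^ n : ℕ) : ℤ) = 2 ^ n := by push_cast; rfl
  rw [← h2n, pow_succ, ← Nat.cast_ofNat, ← Nat.cast_pow, ← Nat.cast_mul]
  omega

lemma mem_blockZ_iff {k : ℤ} {n : ℕ} : k ∈ blockZ n ↔ k.natAbs.size = n := by
  cases n with
  | zero => simp [blockZ, Nat.size_eq_zero]
  | succ n =>
    rw [mem_blockZ_succ_iff, ← Nat.lt_size, ← Nat.size_le]
    omega

lemma card_blockZ_le (n : ℕ) : (blockZ n).card ≤ 2 ^ n := by
  cases n with
  | zero => simp [blockZ]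
  | succ n =>
    have h2n : ((2 ^ n : ℕ) : ℤ) = 2 ^ n := by push_cast; rfl
    have hpos : 0 < 2 ^ n := Nat.two_pow_pos n
    rw [blockZ, Finset.card_sdiff_of_subset (Finset.Icc_subset_Icc (by omega) (by omega)),
      Int.card_Icc, Int.card_Icc, ← h2n, pow_succ, ← Nat.cast_ofNat, ← Nat.cast_pow,
      ← Nat.cast_mul]
    omega

lemma mem_blockD_iff {d : ℕ} {k : Fin d → ℤ} {l : Fin d → ℕ} :
    k ∈ blockD d l ↔ (fun j => (k j).natAbs.size) = l := by
  rw [blockD, Fintype.mem_piFinset, funext_iff]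
  exact forall_congr' fun j => mem_blockZ_iff

lemma card_blockD_le {d : ℕ} (l : Fin d → ℕ) : (blockD d l).card ≤ 2 ^ ∑ j, l j := by
  rw [blockD, Fintype.card_piFinset, ← Finset.prod_pow_eq_pow_sum]
  exact Finset.prod_le_prod' fun j _ => card_blockZ_le (l j)

lemma tsum_eq_tsum_sum_blockD {d : ℕ} (F : (Fin d → ℤ) → ℝ≥0∞) :
    ∑' k, F k = ∑' l : Fin d → ℕ, ∑ k ∈ blockD d l, F k := by
  rw [← ENNReal.tsum_fiberwise F fun k j => (k j).natAbs.size]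
  refine tsum_congr fun l => ?_
  have hfiber : (fun (k : Fin d → ℤ) j => (k j).natAbs.size) ⁻¹' {l} = ↑(blockD d l) := by
    ext k
    simp [mem_blockD_iff]
  rw [hfiber]
  exact Finset.tsum_subtype (blockD d l) F

lemma unitCube_eq_pi (d : ℕ) :
    unitCube d = Measure.pi fun _ : Fin d => volume.restrict (Set.Icc (0 : ℝ) 1) := by
  rw [unitCube, volume_pi, Measure.restrict_pi_pi]

instance (d : ℕ) : IsProbabilityMeasure (unitCube d) := by
  constructor
  rw [unitCube, Measure.restrict_apply_univ, volume_pi_pi]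
  simp

lemma integral_exp_two_pi_I_int_mul (n : ℤ) :
    ∫ t in Set.Icc (0 : ℝ) 1, Complex.exp (2 * π * Complex.I * (n * t)) =
      if n = 0 then 1 else 0 := by
  rw [integral_Icc_eq_integral_Ioc, ← intervalIntegral.integral_of_le zero_le_one]
  split_ifs with hn
  · simp [hn]
  have hc : 2 * π * Complex.I * n ≠ 0 := by simp [Real.pi_ne_zero, hn]
  simp_rw [← mul_assoc]
  rw [integral_exp_mul_complex hc]
  simp [mul_comm _ (n : ℂ), Complex.exp_int_mul_two_pi_mul_I]

@[fun_prop]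
lemma continuous_trigChar {d : ℕ} (k : Fin d → ℤ) : Continuous (trigChar k) := by
  unfold trigChar
  fun_prop

lemma trigChar_mul_conj {d : ℕ} (k m : Fin d → ℤ) (x : Fin d → ℝ) :
    trigChar k x * starRingEnd ℂ (trigChar m x) =
      ∏ j, Complex.exp (2 * π * Complex.I * (((k j - m j : ℤ) : ℂ) * x j)) := by
  rw [trigChar, trigChar, ← Complex.exp_conj, ← Complex.exp_add, ← Complex.exp_sum]
  congr 1
  simp only [map_mul, map_sum, Complex.conj_I, Complex.conj_ofReal, map_ofNat, map_intCast,
    Finset.mul_sum, ← Finset.sum_add_distrib]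
  push_cast
  exact Finset.sum_congr rfl fun j _ => by ring

lemma integral_trigChar_mul_conj {d : ℕ} (k m : Fin d → ℤ) :
    ∫ x, trigChar k x * starRingEnd ℂ (trigChar m x) ∂unitCube d = if k = m then 1 else 0 := by
  simp_rw [trigChar_mul_conj, unitCube_eq_pi]
  rw [integral_fintype_prod_eq_prod
    (fun j t => Complex.exp (2 * π * Complex.I * (((k j - m j : ℤ) : ℂ) * (t : ℝ))))]
  simp_rw [integral_exp_two_pi_I_int_mul, sub_eq_zero]
  split_ifs with hkm
  · simp [hkm]
  · obtain ⟨j, hj⟩ := Function.ne_iff.mp hkm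
    exact Finset.prod_eq_zero (Finset.mem_univ j) (if_neg hj)

lemma integrable_unitCube_of_continuous {d : ℕ} {E : Type*} [NormedAddCommGroup E]
    {g : (Fin d → ℝ) → E} (hg : Continuous g) : Integrable g (unitCube d) :=
  hg.continuousOn.integrableOn_compact (isCompact_univ_pi fun _ => isCompact_Icc)

lemma integral_trigPoly_mul_conj {d : ℕ} (S : Finset (Fin d → ℤ)) (c : (Fin d → ℤ) → ℂ) :
    ∫ x, (∑ k ∈ S, c k * trigChar k x) * starRingEnd ℂ (∑ k ∈ S, c k * trigChar k x)
      ∂unitCube d = ∑ k ∈ S, (‖c k‖ ^ 2 : ℂ) := by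
  have hint (k m : Fin d → ℤ) : Integrable (fun x => c k * starRingEnd ℂ (c m) *
      (trigChar k x * starRingEnd ℂ (trigChar m x))) (unitCube d) :=
    integrable_unitCube_of_continuous (by fun_prop)
  simp only [map_sum, map_mul, Finset.sum_mul_sum, mul_mul_mul_comm (c _) (trigChar _ _)]
  rw [integral_finsetSum _ fun k _ => integrable_finsetSum _ fun m _ => hint k m]
  refine Finset.sum_congr rfl fun k hk => ?_
  simp_rw [integral_finsetSum _ fun m _ => hint k m, integral_const_mul,
    integral_trigChar_mul_conj, mul_ite, mul_one, mul_zero, Finset.sum_ite_eq, if_pos hk,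
    Complex.mul_conj']

lemma eLpNorm_trigPoly_rpow_two {d : ℕ} (S : Finset (Fin d → ℤ)) (c : (Fin d → ℤ) → ℂ) :
    eLpNorm (fun x => ∑ k ∈ S, c k * trigChar k x) 2 (unitCube d) ^ (2 : ℝ) =
      ∑ k ∈ S, (‖c k‖₊ : ℝ≥0∞) ^ (2 : ℝ) := by
  set g : (Fin d → ℝ) → ℂ := fun x => ∑ k ∈ S, c k * trigChar k x
  have hnorm : ∫ x, ‖g x‖ ^ 2 ∂unitCube d = ∑ k ∈ S, ‖c k‖ ^ 2 := by
    have h := integral_trigPoly_mul_conj S c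
    simp_rw [Complex.mul_conj', ← Complex.ofReal_pow, integral_complex_ofReal] at h
    exact_mod_cast h
  have h := eLpNorm_nnreal_pow_eq_lintegral (f := g) (μ := unitCube d) (p := 2) two_ne_zero
  simp only [NNReal.coe_ofNat, ENNReal.coe_ofNat] at h
  have hsq (z : ℂ) : ‖z‖ₑ ^ (2 : ℝ) = ENNReal.ofReal (‖z‖ ^ 2) := by
    rw [ENNReal.ofReal_pow (norm_nonneg z), ofReal_norm, ENNReal.rpow_two]
  simp_rw [h, ← enorm_eq_nnnorm, hsq]
  rw [← ofReal_integral_eq_lintegral_ofReal (integrable_unitCube_of_continuous (by fun_prop))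
    (ae_of_all _ fun x => sq_nonneg _), hnorm, ENNReal.ofReal_sum_of_nonneg fun k _ => sq_nonneg _]

lemma sum_rpow_le_card_rpow_mul_sum_sq_rpow {ι : Type*} (S : Finset ι) (a : ι → ℝ≥0∞)
    {θ : ℝ} (hθ₀ : 0 < θ) (hθ₂ : θ ≤ 2) :
    ∑ k ∈ S, a k ^ θ ≤ (S.card : ℝ≥0∞) ^ (1 - θ / 2) * (∑ k ∈ S, a k ^ (2 : ℝ)) ^ (θ / 2) := by
  have hp : 1 ≤ 2 / θ := by rw [le_div_iff₀ hθ₀]; linarith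
  have hpow (x : ℝ≥0∞) : (x ^ θ) ^ (2 / θ) = x ^ (2 : ℝ) := by
    rw [← ENNReal.rpow_mul, mul_div_cancel₀ _ hθ₀.ne']
  calc ∑ k ∈ S, a k ^ θ = ((∑ k ∈ S, a k ^ θ) ^ (2 / θ)) ^ (θ / 2) := by
        rw [← ENNReal.rpow_mul, div_mul_div_cancel₀ hθ₀.ne', div_self two_ne_zero, ENNReal.rpow_one]
    _ ≤ ((S.card : ℝ≥0∞) ^ (2 / θ - 1) * ∑ k ∈ S, a k ^ (2 : ℝ)) ^ (θ / 2) := by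
        gcongr
        simpa only [hpow] using ENNReal.rpow_sum_le_const_mul_sum_rpow S (fun k => a k ^ θ) hp
    _ = (S.card : ℝ≥0∞) ^ (1 - θ / 2) * (∑ k ∈ S, a k ^ (2 : ℝ)) ^ (θ / 2) := by
        rw [ENNReal.mul_rpow_of_nonneg _ _ (by positivity), ← ENNReal.rpow_mul]
        congr 2
        field_simp

lemma card_blockD_rpow_le {d : ℕ} (l : Fin d → ℕ) {θ : ℝ} (hθ₀ : 0 < θ) (hθ₂ : θ ≤ 2) :
    ((blockD d l).card : ℝ≥0∞) ^ (1 - θ / 2) ≤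
      ENNReal.ofReal ((2 : ℝ) ^ ((∑ j, (l j : ℝ)) * (1 / θ - 1 / 2) * θ)) := by
  have hexp : (∑ j, (l j : ℝ)) * (1 / θ - 1 / 2) * θ = ((∑ j, l j : ℕ) : ℝ) * (1 - θ / 2) := by
    push_cast
    field_simp
  rw [hexp, ← ENNReal.ofReal_rpow_of_pos two_pos, ENNReal.rpow_mul, ENNReal.rpow_natCast,
    ENNReal.ofReal_ofNat]
  gcongr
  · linarith
  · exact_mod_cast card_blockD_le l

lemma sum_blockD_rpow_le {d : ℕ} {p θ : ℝ} (hp : 2 ≤ p) (hθ₀ : 0 < θ) (hθ₂ : θ ≤ 2)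
    (f : (Fin d → ℝ) → ℂ) (l : Fin d → ℕ) :
    ∑ k ∈ blockD d l, (‖fourierCoef f k‖₊ : ℝ≥0∞) ^ θ ≤
      ENNReal.ofReal ((2 : ℝ) ^ ((∑ j, (l j : ℝ)) * (1 / θ - 1 / 2) * θ)) *
        eLpNorm (blockProj f l) (ENNReal.ofReal p) (unitCube d) ^ θ := by
  have hL2 : (∑ k ∈ blockD d l, (‖fourierCoef f k‖₊ : ℝ≥0∞) ^ (2 : ℝ)) ^ (θ / 2) =
      eLpNorm (blockProj f l) 2 (unitCube d) ^ θ := by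
    rw [← eLpNorm_trigPoly_rpow_two, ← ENNReal.rpow_mul, mul_div_cancel₀ _ two_ne_zero]
    rfl
  have hL2_le_Lp : eLpNorm (blockProj f l) 2 (unitCube d) ≤
      eLpNorm (blockProj f l) (ENNReal.ofReal p) (unitCube d) :=
    eLpNorm_le_eLpNorm_of_exponent_le (by simpa using ENNReal.ofReal_le_ofReal hp)
      (continuous_finsetSum _ fun k _ => by fun_prop).aestronglyMeasurable
  calc _ ≤ ((blockD d l).card : ℝ≥0∞) ^ (1 - θ / 2) *
          eLpNorm (blockProj f l) 2 (unitCube d) ^ θ :=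
        hL2 ▸ sum_rpow_le_card_rpow_mul_sum_sq_rpow _ _ hθ₀ hθ₂
    _ ≤ _ := by gcongr; exact card_blockD_rpow_le l hθ₀ hθ₂

theorem besov_embeds_wiener_general (d : ℕ) (p θ : ℝ) (hp : 2 ≤ p) (hθ1 : 0 < θ) (hθ2 : θ ≤ 1)
    (f : (Fin d → ℝ) → ℂ) :
    wienerNorm θ f ≤ besovNorm d p θ (1 / θ - 1 / 2) f := by
  rw [wienerNorm, besovNorm, tsum_eq_tsum_sum_blockD]
  gcongr with l
  exact sum_blockD_rpow_le hp hθ1 (by linarith) f l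

/-- Embedding of the Besov space of dominating mixed smoothness `𝐁^{1/θ-1/2}_{p,θ}` into the
Wiener space `𝒜_θ` with embedding constant `1`, independently of the dimension:
`‖f‖_{𝒜_θ} ≤ ‖f‖_{𝐁^{1/θ-1/2}_{p,θ}}` for `2 ≤ p < ∞` and `0 < θ ≤ 1`. -/
theorem besov_embeds_wiener (d : ℕ) (p θ : ℝ) (hp : 2 ≤ p) (hθ1 : 0 < θ) (hθ2 : θ ≤ 1)
    (f : (Fin d → ℝ) → ℂ) (hf : MemLp f (ENNReal.ofReal p) (unitCube d)) :
    wienerNorm θ f ≤ besovNorm d p θ (1 / θ - 1 / 2) f :=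
  besov_embeds_wiener_general d p θ hp hθ1 hθ2 f
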